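/- Let R, R_d ∈ SO(3) and ψ ∈ ℝ with Ψ(R,R_d) < ψ < 2. Then Ψ(R,R_d) ≤ ‖e_R(R,R_d)‖²/(2 - ψ), where Ψ(R,R_d) = (1/2)tr(I - R_dᵀR) and e_R = (1/2)S⁻¹(R_dᵀR - RᵀR_d). -/

import Mathlib

open Matrix

noncomputable def enorm3 (v : Fin 3 → ℝ) : ℝ := ‖(WithLp.equiv 2 (Fin 3 → ℝ)).symm v‖

def vee (A : Matrix (Fin 3) (Fin 3) ℝ) : Fin 3 → ℝ := ![A 2 1, A 0 2, A 1 0]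

noncomputable def Psi (R Rd : Matrix (Fin 3) (Fin 3) ℝ) : ℝ :=
  (1 / 2) * Matrix.trace (1 - Rdᵀ * R)

noncomputable def eRvec (R Rd : Matrix (Fin 3) (Fin 3) ℝ) : Fin 3 → ℝ :=
  (1 / 2 : ℝ) • vee (Rdᵀ * R - Rᵀ * Rd)

/-!
Everything depends only on the relative rotation `Q = R_dᵀ R ∈ SO(3)`, with `Ψ = (3 - tr Q)/2`
and `e_R = ½ (Q - Qᵀ)^∨`. For a rotation the adjugate is the transpose, so each diagonal entry
of `Q` equals the complementary 2×2 minor; together with the unit column norms this gives the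
identity `‖e_R‖² = Ψ (2 - Ψ)`. Since `0 ≤ Ψ < ψ < 2`, the claim follows from `2 - ψ ≤ 2 - Ψ`.
-/

theorem Matrix.adjugate_eq_transpose_of_transpose_mul_self {n α : Type*} [Fintype n]
    [DecidableEq n] [CommRing α] {Q : Matrix n n α} (hQ : Qᵀ * Q = 1) (hdet : Q.det = 1) :
    adjugate Q = Qᵀ := by
  calc adjugate Q = (Qᵀ * Q) * adjugate Q := by rw [hQ, Matrix.one_mul]
    _ = Qᵀ := by rw [Matrix.mul_assoc, mul_adjugate, hdet, one_smul, Matrix.mul_one]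

theorem Matrix.diag_le_one_of_transpose_mul_self {n : Type*} [Fintype n] [DecidableEq n]
    {Q : Matrix n n ℝ} (hQ : Qᵀ * Q = 1) (i : n) : Q i i ≤ 1 := by
  have hU : Q ∈ unitaryGroup n ℝ := by
    rwa [mem_unitaryGroup_iff', star_eq_conjTranspose, conjTranspose_eq_transpose_of_trivial]
  exact (le_abs_self _).trans (entry_norm_bound_of_unitary hU i i)

theorem Matrix.transpose_mul_self_of_transpose_mul {n α : Type*} [Fintype n] [DecidableEq n]
    [CommRing α] {A B : Matrix n n α} (hA : Aᵀ * A = 1) (hB : Bᵀ * B = 1) :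
    (Bᵀ * A)ᵀ * (Bᵀ * A) = 1 := by
  rw [transpose_mul, transpose_transpose, Matrix.mul_assoc, ← Matrix.mul_assoc B,
    mul_eq_one_comm.mp hB, Matrix.one_mul, hA]

theorem enorm3_sq (v : Fin 3 → ℝ) : enorm3 v ^ 2 = v 0 ^ 2 + v 1 ^ 2 + v 2 ^ 2 := by
  rw [enorm3, EuclideanSpace.norm_eq, Real.sq_sqrt (by positivity)]
  simp [Fin.sum_univ_three]

theorem Psi_eq (R Rd : Matrix (Fin 3) (Fin 3) ℝ) :
    Psi R Rd = (3 - ((Rdᵀ * R) 0 0 + (Rdᵀ * R) 1 1 + (Rdᵀ * R) 2 2)) / 2 := by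
  simp only [Psi, trace_fin_three, Matrix.sub_apply, one_apply_eq]
  ring

theorem eRvec_eq (R Rd : Matrix (Fin 3) (Fin 3) ℝ) :
    eRvec R Rd = (1 / 2 : ℝ) • vee (Rdᵀ * R - (Rdᵀ * R)ᵀ) := by
  rw [eRvec, transpose_mul, transpose_transpose]

theorem sq_enorm3_half_vee_sub_transpose {Q : Matrix (Fin 3) (Fin 3) ℝ} (hQ : Qᵀ * Q = 1)
    (hdet : Q.det = 1) :
    enorm3 ((1 / 2 : ℝ) • vee (Q - Qᵀ)) ^ 2 =
      (3 - (Q 0 0 + Q 1 1 + Q 2 2)) / 2 * (2 - (3 - (Q 0 0 + Q 1 1 + Q 2 2)) / 2) := by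
  have hadj := adjugate_eq_transpose_of_transpose_mul_self hQ hdet
  rw [adjugate_fin_three] at hadj
  have col (j : Fin 3) := congrFun (congrFun hQ j) j
  simp only [mul_apply, transpose_apply, Fin.sum_univ_three, one_apply_eq] at col
  have minor0 := congrFun (congrFun hadj 0) 0
  have minor1 := congrFun (congrFun hadj 1) 1
  have minor2 := congrFun (congrFun hadj 2) 2
  simp only [Fin.isValue, of_apply, cons_val', cons_val_zero, cons_val_fin_one, transpose_apply,
    cons_val_one, cons_val] at minor0 minor1 minor2
  rw [enorm3_sq]
  simp only [vee, Pi.smul_apply, Matrix.sub_apply, transpose_apply, smul_eq_mul, cons_val_zero,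
    cons_val_one, cons_val_two, head_cons, tail_cons, Fin.isValue]
  linear_combination (col 0 + col 1 + col 2) / 4 + (minor0 + minor1 + minor2) / 2

theorem sq_enorm3_eRvec {R Rd : Matrix (Fin 3) (Fin 3) ℝ} (hR : Rᵀ * R = 1) (hRdet : R.det = 1)
    (hRd : Rdᵀ * Rd = 1) (hRddet : Rd.det = 1) :
    enorm3 (eRvec R Rd) ^ 2 = Psi R Rd * (2 - Psi R Rd) := by
  have hQ := transpose_mul_self_of_transpose_mul hR hRd
  have hdet : (Rdᵀ * R).det = 1 := by rw [det_mul, det_transpose, hRdet, hRddet, one_mul]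
  rw [eRvec_eq, Psi_eq, sq_enorm3_half_vee_sub_transpose hQ hdet]

theorem Psi_nonneg {R Rd : Matrix (Fin 3) (Fin 3) ℝ} (hR : Rᵀ * R = 1) (hRd : Rdᵀ * Rd = 1) :
    0 ≤ Psi R Rd := by
  have hdiag := diag_le_one_of_transpose_mul_self (transpose_mul_self_of_transpose_mul hR hRd)
  rw [Psi_eq]
  linarith [hdiag 0, hdiag 1, hdiag 2]

theorem stmt3 (R Rd : Matrix (Fin 3) (Fin 3) ℝ) (ψ : ℝ)
    (hR : Rᵀ * R = 1) (hRdet : R.det = 1)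
    (hRd : Rdᵀ * Rd = 1) (hRddet : Rd.det = 1)
    (h1 : Psi R Rd < ψ) (h2 : ψ < 2) :
    Psi R Rd ≤ (enorm3 (eRvec R Rd)) ^ 2 / (2 - ψ) := by
  rw [sq_enorm3_eRvec hR hRdet hRd hRddet, le_div_iff₀ (by linarith)]
  exact mul_le_mul_of_nonneg_left (by linarith) (Psi_nonneg hR hRd)
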